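/- arXiv:math/0111067 — 2 statements merged into one kernel-verified Lean document; each statement's English description precedes it below -/
import Mathlib

section
/- Suppose s is a complex number such that the series Σ_𝔵 (1/l(𝔵)) e^{−s·w_t(𝔵)}, taken over all nonempty finite words 𝔵 over the alphabet {1,...,N}, converges absolutely. Then exp(Σ_𝔵 (1/l(𝔵)) e^{−s·w_t(𝔵)}) = Π_𝔭 (1 − e^{−s·w_t(𝔭)})^{−1}, where the product runs over all periodic orbits 𝔭 of the shift σ and converges (multipliably). -/
namespace SuspendedFlow

/-- The space of sequences over the alphabet `{1,...,N}`. -/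
abbrev Sequences (N : ℕ) := ℕ → Fin N

/-- The left shift on sequences. -/
def shift {N : ℕ} (a : Sequences N) : Sequences N := fun n => a (n + 1)

/-- Nonempty finite words over the alphabet `{1,...,N}`: a word of length `l + 1`. -/
abbrev Word (N : ℕ) := Σ l : ℕ, Fin (l + 1) → Fin N

/-- The length of a word. -/
def wordLen {N : ℕ} (x : Word N) : ℕ := x.1 + 1

/-- The periodic sequence obtained by repeating a finite word. -/
def periodize {N : ℕ} (x : Word N) : Sequences N :=
  fun n => x.2 ⟨n % (x.1 + 1), Nat.mod_lt n (Nat.succ_pos x.1)⟩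

/-- Total weight of a finite word: `w(a) + w(σa) + ⋯ + w(σ^{l-1}a)`, where `a` is the
periodic sequence obtained by repeating the word. -/
noncomputable def totalWeight {N : ℕ} (w : Sequences N → ℝ) (x : Word N) : ℝ :=
  ∑ i : Fin (x.1 + 1), w (shift^[(i : ℕ)] (periodize x))

/-- A finite set of sequences is a periodic orbit of the shift if it is the orbit of a
periodic sequence. -/
def IsPeriodicOrbit {N : ℕ} (p : Finset (Sequences N)) : Prop :=
  ∃ a : Sequences N, (∃ l : ℕ, 1 ≤ l ∧ shift^[l] a = a) ∧
    (p : Set (Sequences N)) = {b | ∃ k : ℕ, b = shift^[k] a}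

/-- Total weight of a periodic orbit. -/
noncomputable def orbitWeight {N : ℕ} (w : Sequences N → ℝ) (p : Finset (Sequences N)) : ℝ :=
  ∑ b ∈ p, w b

/-!
Repeating a word of length `n` gives a point of period `n`, so words correspond to triples
`(p, b, k)`: a periodic orbit `p`, a starting point `b ∈ p`, and the number `k + 1` of times the
word winds around `p`. The term of such a word is `z_p ^ (k + 1) / (|p| (k + 1))` with
`z_p = exp (-s w_t(p))`. Summing over the `|p|` starting points and over `k` gives
`-log (1 - z_p)` (absolute convergence forces `‖z_p‖ < 1`), and exponentiating this convergent
sum of logarithms gives the Euler product.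
-/

open Function Finset

section Orbits

variable {α : Type*} (f : α → α)

open scoped Classical in
/-- Empty unless `a` is a periodic point. -/
noncomputable def orbitFinset (a : α) : Finset α :=
  (range (minimalPeriod f a)).image (f^[·] a)

abbrev Orbits : Type _ := {p : Finset α // ∃ a ∈ periodicPts f, orbitFinset f a = p}

variable {f} {a b : α}

lemma mem_orbitFinset_iff_mem_periodicOrbit : b ∈ orbitFinset f a ↔ b ∈ periodicOrbit f a := by
  classical
  simp [orbitFinset, periodicOrbit_def, eq_comm]

lemma mem_orbitFinset (ha : a ∈ periodicPts f) : b ∈ orbitFinset f a ↔ ∃ n, f^[n] a = b := by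
  rw [mem_orbitFinset_iff_mem_periodicOrbit, mem_periodicOrbit_iff ha]

lemma coe_orbitFinset (ha : a ∈ periodicPts f) : (orbitFinset f a : Set α) = Set.range (f^[·] a) :=
  Set.ext fun _ => mem_orbitFinset ha

lemma self_mem_orbitFinset (ha : a ∈ periodicPts f) : a ∈ orbitFinset f a :=
  (mem_orbitFinset ha).2 ⟨0, rfl⟩

lemma mem_periodicPts_of_orbitFinset_nonempty (h : (orbitFinset f a).Nonempty) :
    a ∈ periodicPts f := by
  classical
  rw [← minimalPeriod_pos_iff_mem_periodicPts, Nat.pos_iff_ne_zero]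
  intro h0
  simp [orbitFinset, h0] at h

lemma orbitFinset_eq_of_mem (hb : b ∈ orbitFinset f a) : orbitFinset f b = orbitFinset f a := by
  have ha := mem_periodicPts_of_orbitFinset_nonempty ⟨b, hb⟩
  obtain ⟨n, rfl⟩ := (mem_orbitFinset ha).1 hb
  ext c
  rw [mem_orbitFinset_iff_mem_periodicOrbit, mem_orbitFinset_iff_mem_periodicOrbit,
    periodicOrbit_apply_iterate_eq ha]

lemma mem_periodicPts_of_mem_orbitFinset (hb : b ∈ orbitFinset f a) : b ∈ periodicPts f :=
  mem_periodicPts_of_orbitFinset_nonempty (orbitFinset_eq_of_mem hb ▸ ⟨b, hb⟩)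

lemma card_orbitFinset (a : α) : #(orbitFinset f a) = minimalPeriod f a := by
  classical
  rw [orbitFinset, card_image_of_injOn, card_range]
  simpa using iterate_injOn_Iio_minimalPeriod (f := f) (x := a)

lemma sum_orbitFinset {M : Type*} [AddCommMonoid M] (g : α → M) (a : α) :
    ∑ b ∈ orbitFinset f a, g b = ∑ i ∈ range (minimalPeriod f a), g (f^[i] a) := by
  classical
  rw [orbitFinset, sum_image]
  simpa using iterate_injOn_Iio_minimalPeriod (f := f) (x := a)

lemma sum_range_minimalPeriod_mul {M : Type*} [AddCommMonoid M] (g : α → M) (a : α) (k : ℕ) :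
    ∑ i ∈ range (minimalPeriod f a * k), g (f^[i] a)
      = k • ∑ i ∈ range (minimalPeriod f a), g (f^[i] a) := by
  induction k with
  | zero => simp
  | succ k ih =>
    rw [Nat.mul_succ, sum_range_add, ih, succ_nsmul]
    congr 1
    refine sum_congr rfl fun i _ => ?_
    rw [add_comm, iterate_add_apply, ((isPeriodicPt_minimalPeriod f a).mul_const k).eq]

lemma orbitFinset_nonempty (ha : a ∈ periodicPts f) : (orbitFinset f a).Nonempty :=
  ⟨a, self_mem_orbitFinset ha⟩

section OrbitOf

variable {p : Finset α} (hp : ∃ a ∈ periodicPts f, orbitFinset f a = p)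
include hp

lemma mem_periodicPts_of_mem_orbit (hb : b ∈ p) : b ∈ periodicPts f := by
  obtain ⟨a, -, rfl⟩ := hp
  exact mem_periodicPts_of_mem_orbitFinset hb

lemma orbitFinset_eq_of_mem_orbit (hb : b ∈ p) : orbitFinset f b = p := by
  obtain ⟨a, -, rfl⟩ := hp
  exact orbitFinset_eq_of_mem hb

lemma card_eq_minimalPeriod_of_mem_orbit (hb : b ∈ p) : #p = minimalPeriod f b := by
  rw [← orbitFinset_eq_of_mem_orbit hp hb, card_orbitFinset]

lemma nonempty_of_orbit : p.Nonempty := by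
  obtain ⟨a, ha, rfl⟩ := hp
  exact orbitFinset_nonempty ha

end OrbitOf

variable (f) in
noncomputable def periodicPtsEquivSigmaOrbits : periodicPts f ≃ Σ p : Orbits f, p.1 where
  toFun a := ⟨⟨orbitFinset f a, a, a.2, rfl⟩, a, self_mem_orbitFinset a.2⟩
  invFun c := ⟨c.2, mem_periodicPts_of_mem_orbit c.1.2 c.2.2⟩
  left_inv _ := rfl
  right_inv c := Sigma.subtype_ext (Subtype.ext (orbitFinset_eq_of_mem_orbit c.1.2 c.2.2)) rfl

variable (f) in
noncomputable def sigmaIsPeriodicPtEquiv :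
    (Σ n : ℕ, {a // IsPeriodicPt f (n + 1) a}) ≃ periodicPts f × ℕ where
  toFun x := (⟨x.2, mk_mem_periodicPts x.1.succ_pos x.2.2⟩, (x.1 + 1) / minimalPeriod f x.2 - 1)
  invFun y := ⟨minimalPeriod f y.1 * (y.2 + 1) - 1, y.1, by
    rw [Nat.sub_add_cancel (Nat.mul_pos (minimalPeriod_pos_of_mem_periodicPts y.1.2) y.2.succ_pos)]
    exact (isPeriodicPt_minimalPeriod f y.1).mul_const _⟩
  left_inv x := by
    have hdvd := x.2.2.minimalPeriod_dvd
    have hpos := minimalPeriod_pos_of_mem_periodicPts (mk_mem_periodicPts x.1.succ_pos x.2.2)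
    refine Sigma.subtype_ext ?_ rfl
    dsimp only
    rw [Nat.sub_add_cancel (Nat.div_pos (Nat.le_of_dvd x.1.succ_pos hdvd) hpos),
      Nat.mul_div_cancel' hdvd, Nat.add_sub_cancel]
  right_inv y := by
    have hpos := minimalPeriod_pos_of_mem_periodicPts y.1.2
    refine Prod.ext rfl ?_
    dsimp only
    rw [Nat.sub_add_cancel (Nat.mul_pos hpos y.2.succ_pos), Nat.mul_div_cancel_left _ hpos,
      Nat.add_one_sub_one]

lemma sigmaIsPeriodicPtEquiv_symm_fst_add_one (y : periodicPts f × ℕ) :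
    ((sigmaIsPeriodicPtEquiv f).symm y).1 + 1 = minimalPeriod f y.1 * (y.2 + 1) :=
  Nat.sub_add_cancel (Nat.mul_pos (minimalPeriod_pos_of_mem_periodicPts y.1.2) y.2.succ_pos)

end Orbits

section Series

open Complex

lemma norm_pow_succ_div (z : ℂ) (k : ℕ) : ‖z ^ (k + 1) / (k + 1)‖ = ‖z‖ ^ (k + 1) / (k + 1) := by
  rw [norm_div, norm_pow]
  norm_cast

lemma norm_lt_one_of_summable_norm_pow_succ_div {z : ℂ}
    (h : Summable fun k : ℕ => ‖z ^ (k + 1) / (k + 1)‖) : ‖z‖ < 1 := by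
  by_contra! hz
  refine Real.not_summable_one_div_natCast ((summable_nat_add_iff 1).1 (h.of_nonneg_of_le
    (fun _ => by positivity) fun k => ?_))
  rw [norm_pow_succ_div]
  push_cast
  gcongr
  exact one_le_pow₀ hz

lemma hasSum_inv_card_mul_pow_succ_div {β : Type*} [Fintype β] [Nonempty β] {z : ℂ}
    (hz : ‖z‖ < 1) :
    HasSum (fun c : β × ℕ => (Fintype.card β : ℂ)⁻¹ * (z ^ (c.2 + 1) / (c.2 + 1)))
      (-log (1 - z)) := by
  have hcard : HasSum (fun _ : β => (Fintype.card β : ℂ)⁻¹) 1 := by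
    have := hasSum_fintype fun _ : β => (Fintype.card β : ℂ)⁻¹
    rwa [Finset.sum_const, Finset.card_univ, nsmul_eq_mul, mul_inv_cancel₀ (by simp)] at this
  have hlog : Summable fun k : ℕ => ‖z ^ (k + 1) / (k + 1)‖ := by
    simpa only [norm_pow_succ_div] using
      (Real.hasSum_pow_div_log_of_abs_lt_one (by rwa [abs_norm])).summable
  have := hcard.mul (hasSum_taylorSeries_neg_log' hz)
    (summable_mul_of_summable_norm (f := fun _ : β => (Fintype.card β : ℂ)⁻¹)
      (g := fun k : ℕ => z ^ (k + 1) / (k + 1)) .of_finite hlog)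
  rwa [one_mul] at this

lemma hasProd_inv_one_sub_of_hasSum_neg_log {ι : Type*} {z : ι → ℂ} {a : ℂ}
    (hz : ∀ i, ‖z i‖ < 1) (h : HasSum (fun i => -log (1 - z i)) a) :
    HasProd (fun i => (1 - z i)⁻¹) (exp a) := by
  have hre : ∀ i, 0 < (1 - z i).re := fun i => by
    rw [sub_re, one_re, sub_pos]
    exact (re_le_norm _).trans_lt (hz i)
  refine hasProd_of_hasSum_log (fun i => inv_ne_zero fun h0 => by simpa [h0] using hre i)
    (h.congr_fun fun i => ?_)
  rw [log_inv _ ((arg_lt_pi_iff.2 (Or.inl (hre i).le)).ne)]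

end Series

section Shift

variable {N : ℕ}

lemma shift_iterate_apply (a : Sequences N) (k n : ℕ) : shift^[k] a n = a (n + k) := by
  induction k generalizing a with
  | zero => rfl
  | succ k ih => rw [iterate_succ_apply, ih]; rfl

lemma isPeriodicPt_shift_iff {a : Sequences N} {l : ℕ} :
    IsPeriodicPt shift l a ↔ Periodic a l := by
  simp only [IsPeriodicPt, IsFixedPt, funext_iff, shift_iterate_apply, Periodic]

lemma periodize_isPeriodicPt (x : Word N) : IsPeriodicPt shift (x.1 + 1) (periodize x) :=
  isPeriodicPt_shift_iff.2 fun n => by simp only [periodize, Nat.add_mod_right]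

variable (N) in
noncomputable def wordEquiv : Word N ≃ Σ n : ℕ, {a : Sequences N // IsPeriodicPt shift (n + 1) a} :=
  Equiv.sigmaCongrRight fun n =>
    { toFun x := ⟨periodize ⟨n, x⟩, periodize_isPeriodicPt ⟨n, x⟩⟩
      invFun a i := a.1 i
      left_inv x := funext fun i => by simp [periodize, Nat.mod_eq_of_lt i.2]
      right_inv a := Subtype.ext <| funext fun m => (isPeriodicPt_shift_iff.1 a.2).map_mod_nat m }

lemma periodize_wordEquiv_symm (x : Σ n : ℕ, {a : Sequences N // IsPeriodicPt shift (n + 1) a}) :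
    periodize ((wordEquiv N).symm x) = x.2 :=
  congrArg (fun y => (y.2 : Sequences N)) ((wordEquiv N).apply_symm_apply x)

lemma wordLen_wordEquiv_symm (x : Σ n : ℕ, {a : Sequences N // IsPeriodicPt shift (n + 1) a}) :
    wordLen ((wordEquiv N).symm x) = x.1 + 1 :=
  rfl

lemma totalWeight_wordEquiv_symm (w : Sequences N → ℝ)
    (x : Σ n : ℕ, {a : Sequences N // IsPeriodicPt shift (n + 1) a}) :
    totalWeight w ((wordEquiv N).symm x) = ∑ i ∈ range (x.1 + 1), w (shift^[i] x.2) := by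
  rw [totalWeight, Fin.sum_univ_eq_sum_range (fun i => w (shift^[i] _)), periodize_wordEquiv_symm]
  rfl

lemma isPeriodicOrbit_iff {p : Finset (Sequences N)} :
    IsPeriodicOrbit p ↔ ∃ a ∈ periodicPts shift, orbitFinset shift a = p := by
  simp only [IsPeriodicOrbit]
  constructor
  · rintro ⟨a, ⟨l, hl, hla⟩, hp⟩
    have ha := mk_mem_periodicPts hl hla
    refine ⟨a, ha, coe_injective ?_⟩
    rw [coe_orbitFinset ha, hp]
    simp only [Set.range, eq_comm]
  · rintro ⟨a, ha, rfl⟩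
    refine ⟨a, ⟨_, minimalPeriod_pos_of_mem_periodicPts ha, iterate_minimalPeriod⟩, ?_⟩
    rw [coe_orbitFinset ha]
    simp only [Set.range, eq_comm]

end Shift

section EulerProduct

variable {N : ℕ}

noncomputable def zetaTerm (w : Sequences N → ℝ) (s : ℂ) (x : Word N) : ℂ :=
  (1 / (wordLen x : ℂ)) * Complex.exp (-s * (totalWeight w x : ℂ))

variable (N) in
noncomputable def sigmaOrbitEquivWord :
    (Σ p : {p : Finset (Sequences N) // IsPeriodicOrbit p}, p.1 × ℕ) ≃ Word N :=
  (Equiv.sigmaCongrLeft (β := fun q : Orbits (shift (N := N)) => q.1 × ℕ)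
      (Equiv.subtypeEquivRight fun _ => isPeriodicOrbit_iff)).trans <|
    (Equiv.sigmaProdDistrib _ _).symm.trans <|
      ((periodicPtsEquivSigmaOrbits shift).symm.prodCongr (Equiv.refl ℕ)).trans <|
        (sigmaIsPeriodicPtEquiv shift).symm.trans (wordEquiv N).symm

lemma zetaTerm_sigmaOrbitEquivWord (w : Sequences N → ℝ) (s : ℂ)
    (p : {p : Finset (Sequences N) // IsPeriodicOrbit p}) (b : p.1) (k : ℕ) :
    zetaTerm w s (sigmaOrbitEquivWord N ⟨p, b, k⟩)
      = (#p.1 : ℂ)⁻¹ * (Complex.exp (-s * orbitWeight w p.1) ^ (k + 1) / (k + 1)) := by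
  have hp := isPeriodicOrbit_iff.1 p.2
  set y := (sigmaIsPeriodicPtEquiv shift).symm (⟨b, mem_periodicPts_of_mem_orbit hp b.2⟩, k)
  have hlen : y.1 + 1 = #p.1 * (k + 1) := by
    rw [sigmaIsPeriodicPtEquiv_symm_fst_add_one, card_eq_minimalPeriod_of_mem_orbit hp b.2]
  have hweight : totalWeight w ((wordEquiv N).symm y) = (k + 1) * orbitWeight w p.1 := by
    rw [totalWeight_wordEquiv_symm]
    change ∑ i ∈ range (y.1 + 1), w (shift^[i] b) = _
    rw [sigmaIsPeriodicPtEquiv_symm_fst_add_one, sum_range_minimalPeriod_mul, ← sum_orbitFinset,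
      orbitFinset_eq_of_mem_orbit hp b.2, nsmul_eq_mul]
    push_cast
    rfl
  change zetaTerm w s ((wordEquiv N).symm y) = _
  rw [zetaTerm, wordLen_wordEquiv_symm, hlen, hweight, ← Complex.exp_nat_mul]
  push_cast
  field_simp

end EulerProduct

theorem euler_product_general (N : ℕ) (w : Sequences N → ℝ) (s : ℂ)
    (habs : Summable fun x : Word N =>
      ‖(1 / (wordLen x : ℂ)) * Complex.exp (-s * (totalWeight w x : ℂ))‖) :
    Multipliable (fun p : {p : Finset (Sequences N) // IsPeriodicOrbit p} =>
        (1 - Complex.exp (-s * (orbitWeight w p.1 : ℂ)))⁻¹) ∧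
      Complex.exp (∑' x : Word N, (1 / (wordLen x : ℂ)) * Complex.exp (-s * (totalWeight w x : ℂ)))
        = ∏' p : {p : Finset (Sequences N) // IsPeriodicOrbit p},
            (1 - Complex.exp (-s * (orbitWeight w p.1 : ℂ)))⁻¹ := by
  set e := sigmaOrbitEquivWord N
  set z := fun p : {p : Finset (Sequences N) // IsPeriodicOrbit p} =>
    Complex.exp (-s * (orbitWeight w p.1 : ℂ))
  have hfiber (p) (c : p.1 × ℕ) :
      zetaTerm w s (e ⟨p, c⟩) = (Fintype.card p.1 : ℂ)⁻¹ * (z p ^ (c.2 + 1) / (c.2 + 1)) := by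
    rw [zetaTerm_sigmaOrbitEquivWord, Fintype.card_coe]
  have hnorm : Summable fun c => ‖zetaTerm w s (e c)‖ :=
    (e.summable_iff (f := fun x => ‖zetaTerm w s x‖)).2 habs
  have hne (p : {p : Finset (Sequences N) // IsPeriodicOrbit p}) : p.1.Nonempty :=
    nonempty_of_orbit (isPeriodicOrbit_iff.1 p.2)
  have hz (p) : ‖z p‖ < 1 := by
    obtain ⟨b, hb⟩ := hne p
    have := (hnorm.sigma_factor p).prod_factor ⟨b, hb⟩
    simp only [hfiber, norm_mul] at this
    exact norm_lt_one_of_summable_norm_pow_succ_div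
      ((summable_mul_left_iff (by simpa using (hne p).ne_empty)).1 this)
  have hsum : HasSum (fun p => -Complex.log (1 - z p)) (∑' x, zetaTerm w s x) := by
    refine ((e.hasSum_iff (f := zetaTerm w s)).2 habs.of_norm.hasSum).sigma fun p => ?_
    simp only [comp_apply, hfiber]
    have := (hne p).to_subtype
    exact hasSum_inv_card_mul_pow_succ_div (hz p)
  have hprod := hasProd_inv_one_sub_of_hasSum_neg_log hz hsum
  exact ⟨hprod.multipliable, hprod.tprod_eq.symm⟩

/-- Euler product: `ζ_w(s) = exp(∑_x (1/l(x)) e^{-s w_t(x)}) = ∏_p (1 - e^{-s w_t(p)})⁻¹`,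
the product over all periodic orbits of the shift being multipliable. -/
theorem euler_product (N : ℕ) (hN : 1 ≤ N) (w : Sequences N → ℝ) (hw : ∀ a, 0 < w a) (s : ℂ)
    (habs : Summable fun x : Word N =>
      ‖(1 / (wordLen x : ℂ)) * Complex.exp (-s * (totalWeight w x : ℂ))‖) :
    Multipliable (fun p : {p : Finset (Sequences N) // IsPeriodicOrbit p} =>
        (1 - Complex.exp (-s * (orbitWeight w p.1 : ℂ)))⁻¹) ∧
      Complex.exp (∑' x : Word N, (1 / (wordLen x : ℂ)) * Complex.exp (-s * (totalWeight w x : ℂ)))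
        = ∏' p : {p : Finset (Sequences N) // IsPeriodicOrbit p},
            (1 - Complex.exp (-s * (orbitWeight w p.1 : ℂ)))⁻¹ :=
  euler_product_general N w s habs

end SuspendedFlow
end

section
/- Suppose the additive subgroup of ℝ generated by w_1, ..., w_N is dense in ℝ (the nonlattice case). Then the only complex number ω with Σ_{j=1}^N e^{−w_j ω} = 1 and Re ω = D is ω = D; that is, every complex dimension ω ≠ D satisfies Re ω < D. -/
/-!
On the line `Re ω = D` the terms `e^{-w_j ω}` have moduli `e^{-w_j D}` summing to `1`, so their
sum can only equal `1` if every term is positive real, i.e. `cos (w_j Im ω) = 1` for all `j`.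
The reals `x` with `cos (x Im ω) = 1` form a closed subgroup of `ℝ`; containing the dense group
generated by the weights, it is all of `ℝ`, which forces `Im ω = 0`. To the right of the line the
moduli already sum to less than `1`.
-/

open Finset Real

section WeightedExpSum

variable {ι : Type*} [Fintype ι] {w : ι → ℝ}

lemma re_cexp_neg_ofReal_mul (a : ℝ) (ω : ℂ) :
    (Complex.exp (-(a : ℂ) * ω)).re = rexp (-a * ω.re) * cos (a * ω.im) := by
  simp [Complex.exp_re, Complex.mul_re, Complex.mul_im]

lemma norm_cexp_neg_ofReal_mul (a : ℝ) (ω : ℂ) :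
    ‖Complex.exp (-(a : ℂ) * ω)‖ = rexp (-a * ω.re) := by
  simp [Complex.norm_exp, Complex.mul_re]

lemma strictAnti_sum_exp_neg_mul [Nonempty ι] (hw : ∀ j, 0 < w j) :
    StrictAnti fun x : ℝ => ∑ j, rexp (-w j * x) := fun x y hxy =>
  sum_lt_sum_of_nonempty univ_nonempty fun j _ =>
    exp_lt_exp.mpr (by nlinarith [hw j])

lemma re_le_of_sum_cexp_eq_one (hw : ∀ j, 0 < w j) {D : ℝ} (hD : ∑ j, rexp (-w j * D) = 1)
    {ω : ℂ} (hω : ∑ j, Complex.exp (-(w j : ℂ) * ω) = 1) : ω.re ≤ D := by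
  have : Nonempty ι := by
    by_contra h
    simp [not_nonempty_iff.mp h] at hD
  by_contra! hlt
  have hnorm : (1 : ℝ) ≤ ∑ j, rexp (-w j * ω.re) := calc
    (1 : ℝ) = ‖∑ j, Complex.exp (-(w j : ℂ) * ω)‖ := by rw [hω, norm_one]
    _ ≤ ∑ j, ‖Complex.exp (-(w j : ℂ) * ω)‖ := norm_sum_le _ _
    _ = ∑ j, rexp (-w j * ω.re) := by simp only [norm_cexp_neg_ofReal_mul]
  linarith [strictAnti_sum_exp_neg_mul hw hlt]

lemma cos_eq_one_of_sum_cexp_eq_one {D : ℝ} (hD : ∑ j, rexp (-w j * D) = 1) {ω : ℂ}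
    (hω : ∑ j, Complex.exp (-(w j : ℂ) * ω) = 1) (hre : ω.re = D) (j : ι) :
    cos (w j * ω.im) = 1 := by
  have hcos : ∑ j, rexp (-w j * D) * cos (w j * ω.im) = 1 := by
    simpa only [Complex.re_sum, Complex.one_re, re_cexp_neg_ofReal_mul, hre] using
      congrArg Complex.re hω
  have hdefect : ∑ j, rexp (-w j * D) * (1 - cos (w j * ω.im)) = 0 := by
    simp only [mul_sub, mul_one, sum_sub_distrib, hD, hcos, sub_self]
  have hnonneg : ∀ j ∈ univ, 0 ≤ rexp (-w j * D) * (1 - cos (w j * ω.im)) := fun j _ =>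
    mul_nonneg (exp_pos _).le (sub_nonneg.mpr (cos_le_one _))
  have := (sum_eq_zero_iff_of_nonneg hnonneg).mp hdefect j (mem_univ j)
  rcases mul_eq_zero.mp this with h | h
  · exact absurd h (exp_pos _).ne'
  · linarith

end WeightedExpSum

lemma eq_zero_of_dense_closure_of_cos_mul_eq_one {S : Set ℝ}
    (hS : Dense (AddSubgroup.closure S : Set ℝ)) {t : ℝ} (h : ∀ s ∈ S, cos (s * t) = 1) :
    t = 0 := by
  let K : AddSubgroup ℝ := (AddSubgroup.zmultiples (2 * π)).comap (AddMonoidHom.mulRight t)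
  have hK : (K : Set ℝ) = {x | cos (x * t) = 1} := by
    ext x
    simp [K, cos_eq_one_iff, AddSubgroup.mem_zmultiples_iff]
  have hKclosed : IsClosed (K : Set ℝ) := hK ▸ isClosed_eq (by fun_prop) continuous_const
  have hSK : AddSubgroup.closure S ≤ K := (AddSubgroup.closure_le K).mpr fun s hs => hK ▸ h s hs
  have hKuniv : (K : Set ℝ) = Set.univ := by
    rw [← hKclosed.closure_eq]; exact (hS.mono hSK).closure_eq
  by_contra ht
  have : cos (π / t * t) = 1 := by
    have : π / t ∈ (K : Set ℝ) := hKuniv ▸ Set.mem_univ _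
    rwa [hK] at this
  rw [div_mul_cancel₀ π ht, cos_pi] at this
  norm_num at this

theorem nonlattice_unique_on_critical_line_general (N : ℕ) (w : Fin N → ℝ)
    (hw : ∀ j, 0 < w j)
    (D : ℝ) (hD : ∑ j, Real.exp (-(w j) * D) = 1)
    (hdense : Dense ((AddSubgroup.closure (Set.range w) : AddSubgroup ℝ) : Set ℝ)) :
    (∀ ω : ℂ, ∑ j, Complex.exp (-(w j : ℂ) * ω) = 1 → ω.re = D → ω = (D : ℂ)) ∧
      ∀ ω : ℂ, ∑ j, Complex.exp (-(w j : ℂ) * ω) = 1 → ω ≠ (D : ℂ) → ω.re < D := by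
  have hcrit : ∀ ω : ℂ, ∑ j, Complex.exp (-(w j : ℂ) * ω) = 1 → ω.re = D → ω = (D : ℂ) := by
    intro ω hω hre
    have him : ω.im = 0 := eq_zero_of_dense_closure_of_cos_mul_eq_one hdense <| by
      rintro _ ⟨j, rfl⟩
      exact cos_eq_one_of_sum_cexp_eq_one hD hω hre j
    exact Complex.ext (by simpa using hre) (by simpa using him)
  exact ⟨hcrit, fun ω hω hne =>
    (re_le_of_sum_cexp_eq_one hw hD hω).lt_of_ne fun hre => hne (hcrit ω hω hre)⟩

/-- Nonlattice case: if the additive group generated by the weights is dense in `ℝ`,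
then `D` is the only complex dimension on the line `Re s = D`; that is, every complex
dimension `ω ≠ D` satisfies `Re ω < D`. -/
theorem nonlattice_unique_on_critical_line (N : ℕ) (hN : 2 ≤ N) (w : Fin N → ℝ)
    (hw : ∀ j, 0 < w j) (hmono : Monotone w)
    (D : ℝ) (hD : ∑ j, Real.exp (-(w j) * D) = 1)
    (hdense : Dense ((AddSubgroup.closure (Set.range w) : AddSubgroup ℝ) : Set ℝ)) :
    (∀ ω : ℂ, ∑ j, Complex.exp (-(w j : ℂ) * ω) = 1 → ω.re = D → ω = (D : ℂ)) ∧
      ∀ ω : ℂ, ∑ j, Complex.exp (-(w j : ℂ) * ω) = 1 → ω ≠ (D : ℂ) → ω.re < D :=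
  nonlattice_unique_on_critical_line_general N w hw D hD hdense
end
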